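/- arXiv:2407.10364 — 4 statements merged into one kernel-verified Lean document; each statement's English description precedes it below -/
import Mathlib

section
/- Let R = R₁ × R₂ × ⋯ × Rₘ be a finite commutative ring with unity having an odd number of elements, where each Rᵢ is a finite commutative local ring with unique maximal ideal Mᵢ. Then the clique number and the chromatic number of the unitary addition Cayley graph U(R) are both equal to m + ∏_{i=1}^{m} (|Rᵢ| − |Mᵢ|)/2. -/
/-- The unitary addition Cayley graph of a ring `R`: vertices are elements of `R`,
and distinct `x`, `y` are adjacent iff `x + y` is a unit. -/
def unitaryCayley (R : Type*) [CommRing R] : SimpleGraph R where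
  Adj x y := x ≠ y ∧ IsUnit (x + y)
  symm := ⟨fun x y ⟨h1, h2⟩ => ⟨h1.symm, by rwa [add_comm]⟩⟩
  loopless := ⟨fun x ⟨h, _⟩ => h rfl⟩

/-- A proper coloring is complete if it is surjective and between every pair of
distinct color classes there is at least one edge. -/
def IsCompleteColoring {V β : Type*} (G : SimpleGraph V) (C : G.Coloring β) : Prop :=
  Function.Surjective C ∧
    ∀ c₁ c₂ : β, c₁ ≠ c₂ → ∃ x y, G.Adj x y ∧ C x = c₁ ∧ C y = c₂

/-- The achromatic number: the maximum number of colors in a complete proper coloring. -/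
noncomputable def achromaticNumber {V : Type*} (G : SimpleGraph V) : ℕ :=
  sSup {n | ∃ C : G.Coloring (Fin n), IsCompleteColoring G C}

/-!
Since `|R|` is odd, `2` is a unit in every `Rᵢ`, so the units of `Rᵢ` fall into pairs `±u`.
Choosing one element of each pair consistently on residue classes gives a set `Hᵢ` of
`(|Rᵢ| - |Mᵢ|) / 2` units any two of which sum to a unit. Then `∏ Hᵢ`, together with the `m`
vectors obtained from one of its elements by zeroing a single coordinate, is a clique of the
claimed size. Conversely, color a vertex having a non-unit coordinate by the index `j` of such a
coordinate (two vertices of color `j` have sum in `Mⱼ` at `j`), and a vertex all of whose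
coordinates are units by its coordinatewise representative in `∏ Hᵢ` (adjacent vertices cannot
share it, as `u + (-u) = 0` is not a unit). This proper coloring uses as many colors.
-/

open Finset IsLocalRing

/-- In `U(S)` such an `H` is a clique (loops included) meeting every pair `±u` of units. -/
structure IsUnitHalf {S : Type*} [CommRing S] (H : Finset S) : Prop where
  isUnit_add : ∀ a ∈ H, ∀ b ∈ H, IsUnit (a + b)
  mem_or_neg_mem : ∀ u, IsUnit u → u ∈ H ∨ -u ∈ H

namespace IsUnitHalf

variable {S : Type*} [CommRing S] {H : Finset S}

theorem isUnit (hH : IsUnitHalf H) {a : S} (ha : a ∈ H) : IsUnit a := by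
  have h := hH.isUnit_add a ha a ha
  rw [← two_mul] at h
  exact isUnit_of_mul_isUnit_right h

theorem nonempty (hH : IsUnitHalf H) : H.Nonempty := by
  rcases hH.mem_or_neg_mem 1 isUnit_one with h | h
  exacts [⟨1, h⟩, ⟨-1, h⟩]

open Classical in
noncomputable def rep (H : Finset S) (a : S) : S := if a ∈ H then a else -a

theorem rep_mem (hH : IsUnitHalf H) {a : S} (ha : IsUnit a) : rep H a ∈ H := by
  unfold rep
  split_ifs with h
  · exact h
  · exact (hH.mem_or_neg_mem a ha).resolve_left h

theorem isUnit_add_of_eq_zero_or_mem (hH : IsUnitHalf H) {a b : S} (ha : a = 0 ∨ a ∈ H)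
    (hb : b = 0 ∨ b ∈ H) (hab : a ≠ 0 ∨ b ≠ 0) : IsUnit (a + b) := by
  rcases ha with rfl | ha <;> rcases hb with rfl | hb
  · simp at hab
  · simpa using hH.isUnit hb
  · simpa using hH.isUnit ha
  · exact hH.isUnit_add a ha b hb

variable [Nontrivial S]

theorem zero_notMem (hH : IsUnitHalf H) : (0 : S) ∉ H := fun h =>
  not_isUnit_zero (hH.isUnit h)

theorem neg_notMem (hH : IsUnitHalf H) {a : S} (ha : a ∈ H) : -a ∉ H := fun hna =>
  not_isUnit_zero (M₀ := S) (by simpa using hH.isUnit_add a ha (-a) hna)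

theorem eq_of_rep_eq {a b : S} (hab : IsUnit (a + b)) (h : rep H a = rep H b) : a = b := by
  have hne : a + b ≠ 0 := hab.ne_zero
  unfold rep at h
  split_ifs at h
  · exact h
  · exact absurd (by linear_combination h) hne
  · exact absurd (by linear_combination -h) hne
  · exact neg_injective h

theorem two_mul_card [Fintype S] [DecidableEq S] (hH : IsUnitHalf H) :
    2 * #H = #{u : S | IsUnit u} := by
  have hunion : H ∪ H.image (- ·) = ({u : S | IsUnit u} : Finset S) := by
    ext u
    simp only [mem_union, mem_image, mem_filter, mem_univ, true_and]
    constructor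
    · rintro (hu | ⟨a, ha, rfl⟩)
      exacts [hH.isUnit hu, (hH.isUnit ha).neg]
    · intro hu
      exact (hH.mem_or_neg_mem u hu).imp id fun h => ⟨-u, h, neg_neg u⟩
  have hdisj : Disjoint H (H.image (- ·)) := by
    simp only [disjoint_left, mem_image, not_exists, not_and]
    rintro a ha b hb rfl
    exact hH.neg_notMem hb ha
  rw [← hunion, card_union_of_disjoint hdisj, card_image_of_injective _ neg_injective, two_mul]

end IsUnitHalf

theorem isUnit_two_of_odd_card {S : Type*} [CommRing S] [Fintype S]
    (h : Odd (Fintype.card S)) : IsUnit (2 : S) := by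
  obtain ⟨k, hk⟩ := h
  have hcard := Nat.cast_card_eq_zero S
  rw [hk] at hcard
  push_cast at hcard
  exact IsUnit.of_mul_eq_one (-k : S) (by linear_combination -hcard)

namespace IsLocalRing

variable {S : Type*} [CommRing S] [IsLocalRing S]

theorem card_filter_isUnit [Fintype S] [DecidableEq S] :
    #{u : S | IsUnit u} = Fintype.card S - Nat.card (maximalIdeal S) := by
  have hmax : Nat.card (maximalIdeal S) = #{u : S | ¬IsUnit u} := by
    rw [Nat.card_congr (Equiv.subtypeEquivRight (q := fun u : S => ¬IsUnit u)
      fun x => mem_maximalIdeal x), Nat.card_eq_fintype_card, Fintype.card_subtype]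
  rw [hmax, ← card_univ, ← card_filter_add_card_filter_not (s := univ) (p := fun u => IsUnit u)]
  omega

/-- Take `H = {x | f x̄ < f (-x̄)}` for an injection `f` of the residue field into a linear order:
for a unit `u` exactly one of `u`, `-u` lies in `H` because `ū ≠ -ū` (`2` is invertible). -/
theorem exists_isUnitHalf [Fintype S] (h2 : IsUnit (2 : S)) : ∃ H : Finset S, IsUnitHalf H := by
  classical
  let f := embeddingToCardinal (α := ResidueField S)
  refine ⟨({x | f (residue S x) < f (-residue S x)} : Finset S),
    ⟨fun a ha b hb => ?_, fun u hu => ?_⟩⟩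
  · simp only [mem_filter, mem_univ, true_and] at ha hb
    rw [← residue_ne_zero_iff_isUnit, map_add]
    intro hab
    rw [add_eq_zero_iff_eq_neg.mp hab, neg_neg] at ha
    exact lt_asymm ha hb
  · simp only [mem_filter, mem_univ, true_and, map_neg, neg_neg]
    have hu0 : residue S u ≠ 0 := (residue_ne_zero_iff_isUnit u).mpr hu
    have h20 : (2 : ResidueField S) ≠ 0 := by
      rw [← map_ofNat (residue S) 2]
      exact (residue_ne_zero_iff_isUnit _).mpr h2
    have hne : residue S u ≠ -residue S u := fun h =>
      hu0 (by simpa [h20] using (by linear_combination h : 2 * residue S u = 0))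
    exact lt_or_gt_of_ne (f.injective.ne hne)

end IsLocalRing

theorem SimpleGraph.IsNClique.cliqueNum_eq_and_chromaticNumber_eq_of_colorable {V : Type*}
    [Finite V] {G : SimpleGraph V} {n : ℕ} {s : Finset V} (hs : G.IsNClique n s) (hc : G.Colorable n) :
    G.cliqueNum = n ∧ G.chromaticNumber = n := by
  obtain ⟨t, ht⟩ := G.exists_isNClique_cliqueNum
  refine ⟨le_antisymm ?_ ?_, le_antisymm hc.chromaticNumber_le ?_⟩
  · exact ht.card_eq ▸ ht.isClique.card_le_of_colorable hc
  · exact hs.card_eq ▸ hs.isClique.card_le_cliqueNum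
  · exact hs.card_eq ▸ hs.isClique.card_le_chromaticNumber

section Pi

variable {ι : Type*} [Fintype ι] {R : ι → Type*} [∀ i, CommRing (R i)]
  [∀ i, IsLocalRing (R i)] {H : ∀ i, Finset (R i)}

theorem exists_isNClique_unitaryCayley_pi (hH : ∀ i, IsUnitHalf (H i)) :
    ∃ s, (unitaryCayley (∀ i, R i)).IsNClique (Fintype.card ι + ∏ i, #(H i)) s := by
  classical
  choose a ha using fun i => (hH i).nonempty
  have ha0 : ∀ i, a i ≠ 0 := fun i => ne_of_mem_of_not_mem (ha i) (hH i).zero_notMem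
  let e : ι → ∀ i, R i := fun j => Function.update a j 0
  have he_eq_zero : ∀ j i, e j i = 0 → i = j := fun j i h => by
    by_contra hij
    exact ha0 i (by simpa [e, Function.update_of_ne hij] using h)
  have he_inj : Function.Injective e := fun j l h =>
    he_eq_zero l j (h ▸ Function.update_self j 0 a)
  have hdisj : Disjoint (univ.image e) (Fintype.piFinset H) := by
    simp only [disjoint_left, mem_image, Fintype.mem_piFinset, mem_univ, true_and]
    rintro _ ⟨j, rfl⟩ h
    exact (hH j).zero_notMem (by simpa [e] using h j)
  have hcoord : ∀ x ∈ univ.image e ∪ Fintype.piFinset H, ∀ i,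
      (x i = 0 → x = e i) ∧ (x i = 0 ∨ x i ∈ H i) := by
    intro x hx i
    rcases mem_union.mp hx with hx | hx
    · obtain ⟨j, -, rfl⟩ := mem_image.mp hx
      by_cases hij : i = j
      · subst hij
        simp [e]
      · simp [e, Function.update_of_ne hij, ha0 i, ha i]
    · have hxi := Fintype.mem_piFinset.mp hx i
      exact ⟨fun h => absurd (h ▸ hxi) (hH i).zero_notMem, Or.inr hxi⟩
  refine ⟨univ.image e ∪ Fintype.piFinset H, fun x hx y hy hxy => ?_, ?_⟩
  · refine ⟨hxy, Pi.isUnit_iff.mpr fun i => ?_⟩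
    obtain ⟨hx0, hxH⟩ := hcoord x hx i
    obtain ⟨hy0, hyH⟩ := hcoord y hy i
    refine (hH i).isUnit_add_of_eq_zero_or_mem hxH hyH ?_
    by_contra! h
    exact hxy ((hx0 h.1).trans (hy0 h.2).symm)
  · rw [card_union_of_disjoint hdisj, card_image_of_injective _ he_inj, card_univ,
      Fintype.card_piFinset]

theorem colorable_unitaryCayley_pi (hH : ∀ i, IsUnitHalf (H i)) :
    (unitaryCayley (∀ i, R i)).Colorable (Fintype.card ι + ∏ i, #(H i)) := by
  classical
  let C : (∀ i, R i) → ι ⊕ (∀ i, H i) := fun x =>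
    if hx : ∀ i, IsUnit (x i) then
      .inr fun i => ⟨IsUnitHalf.rep (H i) (x i), (hH i).rep_mem (hx i)⟩
    else .inl (not_forall.mp hx).choose
  have hC : ∀ {x y}, (unitaryCayley (∀ i, R i)).Adj x y → C x ≠ C y := by
    rintro x y ⟨hne, hxy⟩ hC
    rw [Pi.isUnit_iff] at hxy
    simp only [C] at hC
    split_ifs at hC with hx hy hy
    · refine hne (funext fun i => IsUnitHalf.eq_of_rep_eq (H := H i) (hxy i) ?_)
      exact congrArg Subtype.val (congrFun (Sum.inr.inj hC) i)
    · have hxj := (not_forall.mp hx).choose_spec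
      have hyj := (not_forall.mp hy).choose_spec
      rw [← Sum.inl.inj hC] at hyj
      exact nonunits_add hxj hyj (hxy _)
  simpa [Fintype.card_sum, Fintype.card_pi] using (SimpleGraph.Coloring.mk C hC).colorable

end Pi

theorem stmt_0 (m : ℕ) (R : Fin m → Type*) [∀ i, CommRing (R i)]
    [∀ i, IsLocalRing (R i)] [∀ i, Fintype (R i)]
    (hodd : Odd (Fintype.card (∀ i, R i))) :
    (unitaryCayley (∀ i, R i)).cliqueNum =
        m + ∏ i, (Fintype.card (R i) - Nat.card (IsLocalRing.maximalIdeal (R i))) / 2 ∧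
    (unitaryCayley (∀ i, R i)).chromaticNumber =
        ((m + ∏ i, (Fintype.card (R i) - Nat.card (IsLocalRing.maximalIdeal (R i))) / 2 : ℕ) : ℕ∞) := by
  classical
  have h2 : ∀ i, IsUnit (2 : R i) := fun i => by
    simpa using (isUnit_two_of_odd_card hodd).map (Pi.evalRingHom R i)
  choose H hH using fun i => exists_isUnitHalf (h2 i)
  have hcard : ∀ i, #(H i) = (Fintype.card (R i) - Nat.card (maximalIdeal (R i))) / 2 := by
    intro i
    have := (hH i).two_mul_card
    rw [card_filter_isUnit] at this
    omega
  obtain ⟨s, hs⟩ := exists_isNClique_unitaryCayley_pi hH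
  have hc := colorable_unitaryCayley_pi hH
  simp only [hcard, Fintype.card_fin] at hs hc
  exact hs.cliqueNum_eq_and_chromaticNumber_eq_of_colorable hc
end

section
/- If q > p ≥ 3 are primes, then the achromatic number of the unitary addition Cayley graph U(ℤ_{pq}) is at least (pq + 1)/2. -/
open Function Finset

section Achromatic

variable {V W β γ : Type*} {G : SimpleGraph V} {H : SimpleGraph W}

lemma IsCompleteColoring.comp_iso {C : H.Coloring β} (hC : IsCompleteColoring H C)
    (e : G ≃g H) : IsCompleteColoring G (C.comp e.toHom) := by
  refine ⟨hC.1.comp e.surjective, fun c₁ c₂ hne => ?_⟩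
  obtain ⟨x, y, hxy, rfl, rfl⟩ := hC.2 c₁ c₂ hne
  exact ⟨e.symm x, e.symm y, e.symm.map_adj_iff.2 hxy, by simp, by simp⟩

lemma IsCompleteColoring.recolorOfEquiv {C : G.Coloring β} (hC : IsCompleteColoring G C)
    (f : β ≃ γ) : IsCompleteColoring G (G.recolorOfEquiv f C) := by
  refine ⟨f.surjective.comp hC.1, fun c₁ c₂ hne => ?_⟩
  obtain ⟨x, y, hxy, hx, hy⟩ := hC.2 (f.symm c₁) (f.symm c₂) (f.symm.injective.ne hne)
  exact ⟨x, y, hxy, by simp [hx], by simp [hy]⟩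

theorem SimpleGraph.Iso.achromaticNumber_eq (e : G ≃g H) :
    achromaticNumber G = achromaticNumber H := by
  unfold achromaticNumber
  congr 1
  ext n
  exact ⟨fun ⟨C, hC⟩ => ⟨C.comp e.symm.toHom, hC.comp_iso e.symm⟩,
    fun ⟨C, hC⟩ => ⟨C.comp e.toHom, hC.comp_iso e⟩⟩

theorem IsCompleteColoring.card_le_achromaticNumber [Finite V] [Fintype β] {C : G.Coloring β}
    (hC : IsCompleteColoring G C) : Fintype.card β ≤ achromaticNumber G := by
  refine le_csSup ⟨Nat.card V, ?_⟩ ⟨_, hC.recolorOfEquiv (Fintype.equivFin β)⟩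
  rintro n ⟨C', hC', -⟩
  simpa using Nat.card_le_card_of_surjective _ hC'

lemma Function.Involutive.sym2_mk_eq_iff {π : V → V} (hπ : Involutive π) {x y : V} :
    s(y, π y) = s(x, π x) ↔ y = x ∨ y = π x := by
  refine ⟨fun h => ?_, ?_⟩
  · rcases Sym2.eq_iff.1 h with ⟨h, -⟩ | ⟨h, -⟩ <;> simp [h]
  · rintro (rfl | rfl)
    · rfl
    · rw [hπ x, Sym2.eq_swap]

lemma Function.Involutive.card_add_one_le_two_mul_card_image_sym2 [Fintype V] [DecidableEq V]
    {π : V → V} (hπ : Involutive π) {s : V} (hs : π s = s) :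
    Fintype.card V + 1 ≤ 2 * #(univ.image fun x => s(x, π x)) := by
  set f : V → Sym2 V := fun x => s(x, π x)
  have hfiber : ∀ b ∈ (univ.erase s).image f, #{a ∈ univ.erase s | f a = b} ≤ 2 := by
    simp only [mem_image]
    rintro _ ⟨x, -, rfl⟩
    calc #{a ∈ univ.erase s | f a = f x} ≤ #{x, π x} := card_le_card fun y hy => by
          simpa [f, hπ.sym2_mk_eq_iff] using (mem_filter.1 hy).2
      _ ≤ 2 := card_le_two
  have himage : (univ.erase s).image f ⊆ (univ.image f).erase (f s) := by
    intro b hb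
    obtain ⟨a, ha, rfl⟩ := mem_image.1 hb
    refine mem_erase.2 ⟨fun h => ?_, mem_image_of_mem f (mem_univ a)⟩
    rcases hπ.sym2_mk_eq_iff.1 h with h | h <;> simp_all
  have h1 := card_le_mul_card_image (univ.erase s) 2 hfiber
  have h2 := card_le_card himage
  rw [card_erase_of_mem (mem_univ s), card_univ] at h1
  rw [card_erase_of_mem (mem_image_of_mem f (mem_univ s))] at h2
  have : 0 < #(univ.image f) := card_pos.2 ⟨f s, mem_image_of_mem f (mem_univ s)⟩
  have : 0 < Fintype.card V := Fintype.card_pos_iff.2 ⟨s⟩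
  omega

theorem le_achromaticNumber_of_involutive [Fintype V] {π : V → V} (hπ : Involutive π) {s : V}
    (hs : π s = s) (hnadj : ∀ x, ¬ G.Adj x (π x))
    (hlink : ∀ x y, y ≠ x → y ≠ π x →
      G.Adj x y ∨ G.Adj x (π y) ∨ G.Adj (π x) y ∨ G.Adj (π x) (π y)) :
    (Fintype.card V + 1) / 2 ≤ achromaticNumber G := by
  classical
  set orbit : V → Sym2 V := fun x => s(x, π x)
  have horbit : ∀ x, orbit (π x) = orbit x := fun x => hπ.sym2_mk_eq_iff.2 (Or.inr rfl)
  let C : G.Coloring (univ.image orbit) :=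
    SimpleGraph.Coloring.mk (fun x => ⟨orbit x, mem_image_of_mem _ (mem_univ x)⟩)
      fun {x y} hxy h => by
        rcases hπ.sym2_mk_eq_iff.1 (congrArg Subtype.val h).symm with rfl | rfl
        · exact G.irrefl hxy
        · exact hnadj x hxy
  have hC : IsCompleteColoring G C := by
    refine ⟨fun ⟨c, hc⟩ => ?_, fun ⟨c₁, hc₁⟩ ⟨c₂, hc₂⟩ hne => ?_⟩
    · obtain ⟨x, -, rfl⟩ := mem_image.1 hc
      exact ⟨x, rfl⟩
    obtain ⟨x, -, rfl⟩ := mem_image.1 hc₁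
    obtain ⟨y, -, rfl⟩ := mem_image.1 hc₂
    have hyx : y ≠ x := fun h => hne (by subst h; rfl)
    have hyp : y ≠ π x := fun h => hne (Subtype.ext (by simp only [h, horbit]))
    rcases hlink x y hyx hyp with h | h | h | h
    · exact ⟨x, y, h, rfl, rfl⟩
    · exact ⟨x, π y, h, rfl, Subtype.ext (horbit y)⟩
    · exact ⟨π x, y, h, Subtype.ext (horbit x), rfl⟩
    · exact ⟨π x, π y, h, Subtype.ext (horbit x), Subtype.ext (horbit y)⟩
  calc (Fintype.card V + 1) / 2 ≤ #(univ.image orbit) := by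
        have : Fintype.card V + 1 ≤ 2 * #(univ.image orbit) :=
          hπ.card_add_one_le_two_mul_card_image_sym2 hs
        omega
    _ = Fintype.card (univ.image orbit) := (Fintype.card_coe _).symm
    _ ≤ achromaticNumber G := hC.card_le_achromaticNumber

end Achromatic

section CommRing

variable {R S : Type*} [CommRing R] [CommRing S]

def RingEquiv.unitaryCayleyIso (e : R ≃+* S) : unitaryCayley R ≃g unitaryCayley S where
  toEquiv := e.toEquiv
  map_rel_iff' := by simp [unitaryCayley, ← map_add]

def UnitLinked (π : R → R) (x y : R) : Prop :=
  IsUnit (x + y) ∨ IsUnit (x + π y) ∨ IsUnit (π x + y) ∨ IsUnit (π x + π y)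

lemma UnitLinked.symm {π : R → R} {x y : R} (h : UnitLinked π x y) : UnitLinked π y x := by
  unfold UnitLinked at *
  rw [add_comm y, add_comm y, add_comm (π y), add_comm (π y)]
  tauto

lemma unitLinked_apply_right_iff {π : R → R} (hπ : Involutive π) {x y : R} :
    UnitLinked π x (π y) ↔ UnitLinked π x y := by
  unfold UnitLinked
  rw [hπ]
  tauto

theorem le_achromaticNumber_unitaryCayley [Fintype R] {π : R → R} (hπ : Involutive π) {s : R}
    (hs : π s = s) (hnot : ∀ x, ¬ IsUnit (x + π x))
    (hlink : ∀ x y, y ≠ x → y ≠ π x → UnitLinked π x y) :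
    (Fintype.card R + 1) / 2 ≤ achromaticNumber (unitaryCayley R) := by
  refine le_achromaticNumber_of_involutive hπ hs (fun x h => hnot x h.2) fun x y hyx hyp => ?_
  have hpy : π y ≠ x := fun h => hyp (by rw [← h, hπ])
  rcases hlink x y hyx hyp with h | h | h | h
  · exact Or.inl ⟨hyx.symm, h⟩
  · exact Or.inr (Or.inl ⟨hpy.symm, h⟩)
  · exact Or.inr (Or.inr (Or.inl ⟨hyp.symm, h⟩))
  · exact Or.inr (Or.inr (Or.inr ⟨hπ.injective.ne hyx.symm, h⟩))

end CommRing

namespace UnitaryCayley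

section Signs

variable {R : Type*} [Ring R] [DecidableEq R] {a b : R}

def signs (R : Type*) [Ring R] [DecidableEq R] : Finset R := {0, 1, -1}

lemma mem_signs : a ∈ signs R ↔ a = 0 ∨ a = 1 ∨ a = -1 := by
  simp [signs]

lemma neg_mem_signs_iff : -a ∈ signs R ↔ a ∈ signs R := by
  simp only [mem_signs, neg_eq_iff_eq_neg, neg_zero, neg_neg]
  tauto

lemma add_ne_zero_of_notMem_signs (ha : a ∉ signs R) (hb : b ∈ signs R) : a + b ≠ 0 :=
  fun h => ha (by rw [eq_neg_of_add_eq_zero_left h]; exact neg_mem_signs_iff.2 hb)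

lemma swap_mem_signs (ha : a ∈ signs R) : Equiv.swap 0 1 a ∈ signs R := by
  rw [Equiv.swap_apply_def]
  split_ifs <;> simp_all [mem_signs]

end Signs

section Pairing

variable {F K : Type*} [Field F] [Field K]

lemma isUnit_prod_iff_ne_zero {x : F × K} : IsUnit x ↔ x.1 ≠ 0 ∧ x.2 ≠ 0 := by
  simp [Prod.isUnit_iff]

variable [DecidableEq F] [DecidableEq K]

lemma swap_add_swap_neg_ne_zero (hF : ringChar F ≠ 2) {a : F} (ha : a ∈ signs F) :
    Equiv.swap 0 1 a + Equiv.swap 0 1 (-a) ≠ 0 := by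
  have := Ring.two_ne_zero hF
  have := Ring.neg_one_ne_one_of_char_ne_two hF
  rw [mem_signs] at ha
  rcases ha with rfl | rfl | rfl <;> simp_all [Equiv.swap_apply_def, one_add_one_eq_two]

/-- The rules of `pairing` cannot be extended to `{0, 1, -1}²`, in which `(0, 0)`, `(1, 0)` and
`(-1, 0)` are pairwise non-adjacent; this table is a complete pairing of `U(𝔽₃ × 𝔽₃)` carried over
to `{0, 1, -1}²`. -/
def corePairing (x : F × K) : F × K :=
  if x.1 = 0 then (if x.2 = 0 then (0, 0) else if x.2 = 1 then (-1, -1) else (1, 1))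
  else if x.1 = 1 then (if x.2 = 0 then (-1, 1) else if x.2 = 1 then (0, -1) else (-1, 0))
  else (if x.2 = 0 then (1, -1) else if x.2 = 1 then (1, 0) else (0, 1))

def pairing (x : F × K) : F × K :=
  if x.1 ∉ signs F then (-x.1, 1 - x.2)
  else if x.2 ∉ signs K then (Equiv.swap 0 1 x.1, -x.2)
  else corePairing x

lemma corePairing_mem_signs (hF : ringChar F ≠ 2) (hK : ringChar K ≠ 2) {x : F × K}
    (h1 : x.1 ∈ signs F) (h2 : x.2 ∈ signs K) :
    (corePairing x).1 ∈ signs F ∧ (corePairing x).2 ∈ signs K := by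
  have hF' := Ring.neg_one_ne_one_of_char_ne_two hF
  have hK' := Ring.neg_one_ne_one_of_char_ne_two hK
  obtain ⟨a, b⟩ := x
  rw [mem_signs] at h1 h2
  rcases h1 with rfl | rfl | rfl <;> rcases h2 with rfl | rfl | rfl <;>
    simp [corePairing, mem_signs, hF', hK', hF'.symm, hK'.symm]

lemma corePairing_corePairing (hF : ringChar F ≠ 2) (hK : ringChar K ≠ 2) {x : F × K}
    (h1 : x.1 ∈ signs F) (h2 : x.2 ∈ signs K) :
    corePairing (corePairing x) = x := by
  have hF' := Ring.neg_one_ne_one_of_char_ne_two hF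
  have hK' := Ring.neg_one_ne_one_of_char_ne_two hK
  obtain ⟨a, b⟩ := x
  rw [mem_signs] at h1 h2
  rcases h1 with rfl | rfl | rfl <;> rcases h2 with rfl | rfl | rfl <;>
    simp [corePairing, hF', hK']

lemma not_isUnit_add_corePairing (hF : ringChar F ≠ 2) (hK : ringChar K ≠ 2) {x : F × K}
    (h1 : x.1 ∈ signs F) (h2 : x.2 ∈ signs K) : ¬ IsUnit (x + corePairing x) := by
  have hF' := Ring.neg_one_ne_one_of_char_ne_two hF
  have hK' := Ring.neg_one_ne_one_of_char_ne_two hK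
  obtain ⟨a, b⟩ := x
  rw [mem_signs] at h1 h2
  rcases h1 with rfl | rfl | rfl <;> rcases h2 with rfl | rfl | rfl <;>
    simp [corePairing, isUnit_prod_iff_ne_zero, hF', hK']

lemma eq_zero_of_corePairing_fst_eq (hF : ringChar F ≠ 2) (hK : ringChar K ≠ 2) {x : F × K}
    (h1 : x.1 ∈ signs F) (h2 : x.2 ∈ signs K) (h : (corePairing x).1 = x.1) : x = 0 := by
  have hF' := Ring.neg_one_ne_one_of_char_ne_two hF
  have hK' := Ring.neg_one_ne_one_of_char_ne_two hK
  obtain ⟨a, b⟩ := x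
  rw [mem_signs] at h1 h2
  rcases h1 with rfl | rfl | rfl <;> rcases h2 with rfl | rfl | rfl <;>
    simp [corePairing, hF', hK', hF'.symm] at h ⊢

lemma eq_zero_of_corePairing_snd_eq (hF : ringChar F ≠ 2) (hK : ringChar K ≠ 2) {x : F × K}
    (h1 : x.1 ∈ signs F) (h2 : x.2 ∈ signs K) (h : (corePairing x).2 = x.2) : x = 0 := by
  have hF' := Ring.neg_one_ne_one_of_char_ne_two hF
  have hK' := Ring.neg_one_ne_one_of_char_ne_two hK
  obtain ⟨a, b⟩ := x
  rw [mem_signs] at h1 h2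
  rcases h1 with rfl | rfl | rfl <;> rcases h2 with rfl | rfl | rfl <;>
    simp [corePairing, hF', hK', hK'.symm] at h ⊢

lemma pairing_of_fst_notMem {x : F × K} (h : x.1 ∉ signs F) :
    pairing x = (-x.1, 1 - x.2) :=
  if_pos h

lemma pairing_of_snd_notMem {x : F × K} (h1 : x.1 ∈ signs F) (h2 : x.2 ∉ signs K) :
    pairing x = (Equiv.swap 0 1 x.1, -x.2) := by
  simp [pairing, h1, h2]

lemma pairing_of_mem_signs {x : F × K} (h1 : x.1 ∈ signs F) (h2 : x.2 ∈ signs K) :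
    pairing x = corePairing x := by
  simp [pairing, h1, h2]

lemma pairing_zero : pairing (0 : F × K) = 0 := by
  simp [pairing, signs, corePairing]

lemma pairing_fst_mem_signs (hF : ringChar F ≠ 2) (hK : ringChar K ≠ 2) {x : F × K}
    (h1 : x.1 ∈ signs F) : (pairing x).1 ∈ signs F := by
  by_cases h2 : x.2 ∈ signs K
  · rw [pairing_of_mem_signs h1 h2]
    exact (corePairing_mem_signs hF hK h1 h2).1
  · rw [pairing_of_snd_notMem h1 h2]
    exact swap_mem_signs h1

lemma pairing_involutive (hF : ringChar F ≠ 2) (hK : ringChar K ≠ 2) :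
    Involutive (pairing : F × K → F × K) := by
  intro x
  by_cases h1 : x.1 ∈ signs F
  · by_cases h2 : x.2 ∈ signs K
    · obtain ⟨h1', h2'⟩ := corePairing_mem_signs hF hK h1 h2
      rw [pairing_of_mem_signs h1 h2, pairing_of_mem_signs h1' h2',
        corePairing_corePairing hF hK h1 h2]
    · rw [pairing_of_snd_notMem h1 h2,
        pairing_of_snd_notMem (swap_mem_signs h1) (neg_mem_signs_iff.not.2 h2)]
      simp
  · rw [pairing_of_fst_notMem h1, pairing_of_fst_notMem (neg_mem_signs_iff.not.2 h1)]
    simp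

lemma not_isUnit_add_pairing (hF : ringChar F ≠ 2) (hK : ringChar K ≠ 2) (x : F × K) :
    ¬ IsUnit (x + pairing x) := by
  rw [isUnit_prod_iff_ne_zero]
  by_cases h1 : x.1 ∈ signs F
  · by_cases h2 : x.2 ∈ signs K
    · rw [pairing_of_mem_signs h1 h2, ← isUnit_prod_iff_ne_zero]
      exact not_isUnit_add_corePairing hF hK h1 h2
    · simp [pairing_of_snd_notMem h1 h2]
  · simp [pairing_of_fst_notMem h1]

lemma snd_eq_zero_of_pairing_snd_eq (hF : ringChar F ≠ 2) (hK : ringChar K ≠ 2) {x : F × K}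
    (h1 : x.1 ∈ signs F) (h : (pairing x).2 = x.2) : x.2 = 0 := by
  by_cases h2 : x.2 ∈ signs K
  · rw [pairing_of_mem_signs h1 h2] at h
    simp [eq_zero_of_corePairing_snd_eq hF hK h1 h2 h]
  · rw [pairing_of_snd_notMem h1 h2] at h
    exact (Ring.eq_self_iff_eq_zero_of_char_ne_two hK).1 h

omit [DecidableEq F] [DecidableEq K] in
lemma add_snd_eq_zero_of_not_isUnit {u v : F × K} (h : ¬ IsUnit (u + v))
    (h1 : u.1 + v.1 ≠ 0) : u.2 + v.2 = 0 := by
  by_contra h2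
  exact h (isUnit_prod_iff_ne_zero.2 ⟨h1, h2⟩)

omit [DecidableEq F] [DecidableEq K] in
lemma add_fst_eq_zero_of_not_isUnit {u v : F × K} (h : ¬ IsUnit (u + v))
    (h2 : u.2 + v.2 ≠ 0) : u.1 + v.1 = 0 := by
  by_contra h1
  exact h (isUnit_prod_iff_ne_zero.2 ⟨h1, h2⟩)

lemma unitLinked_pairing_of_fst_notMem_signs (hF : ringChar F ≠ 2) (hK : ringChar K ≠ 2)
    {x y : F × K} (hx : x.1 ∉ signs F) (hy : y.1 ∉ signs F) : UnitLinked pairing x y := by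
  wlog hxy : x.1 + y.1 ≠ 0 generalizing y
  · rw [← unitLinked_apply_right_iff (pairing_involutive hF hK)]
    refine this (by rwa [pairing_of_fst_notMem hy, neg_mem_signs_iff]) fun h => hx ?_
    rw [pairing_of_fst_notMem hy] at h
    have hx0 : x.1 = 0 := (Ring.eq_self_iff_eq_zero_of_char_ne_two hF).1
      (by dsimp only at h; linear_combination -h - not_not.1 hxy)
    rw [hx0]
    simp [mem_signs]
  unfold UnitLinked
  rw [pairing_of_fst_notMem hx, pairing_of_fst_notMem hy]
  by_cases h2 : x.2 + y.2 = 0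
  · refine Or.inr (Or.inr (Or.inr (isUnit_prod_iff_ne_zero.2 ⟨fun h => hxy ?_, fun h => ?_⟩)))
    · simp only [Prod.fst_add] at h
      linear_combination -h
    · simp only [Prod.snd_add] at h
      exact Ring.two_ne_zero hK (by linear_combination h + h2)
  · exact Or.inl (isUnit_prod_iff_ne_zero.2 ⟨hxy, h2⟩)

lemma unitLinked_pairing_of_fst_notMem_signs_of_fst_mem_signs (hF : ringChar F ≠ 2)
    (hK : ringChar K ≠ 2) {x y : F × K} (hx : x.1 ∉ signs F) (hy : y.1 ∈ signs F) :
    UnitLinked pairing x y := by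
  have hx' : -x.1 ∉ signs F := neg_mem_signs_iff.not.2 hx
  by_contra h
  simp only [UnitLinked, not_or] at h
  obtain ⟨h1, h2, h3, -⟩ := h
  rw [pairing_of_fst_notMem hx] at h3
  have e1 := add_snd_eq_zero_of_not_isUnit h1 (add_ne_zero_of_notMem_signs hx hy)
  have e2 := add_snd_eq_zero_of_not_isUnit h2
    (add_ne_zero_of_notMem_signs hx (pairing_fst_mem_signs hF hK hy))
  have e3 := add_snd_eq_zero_of_not_isUnit h3 (add_ne_zero_of_notMem_signs hx' hy)
  have hy2 := snd_eq_zero_of_pairing_snd_eq hF hK hy (by linear_combination e2 - e1)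
  dsimp only at e3
  exact one_ne_zero (α := K) (by linear_combination e3 + e1 - 2 * hy2)

lemma unitLinked_pairing_of_snd_notMem_signs (hF : ringChar F ≠ 2) (hK : ringChar K ≠ 2)
    {x y : F × K} (hx1 : x.1 ∈ signs F) (hx2 : x.2 ∉ signs K) (hy1 : y.1 ∈ signs F)
    (hy2 : y.2 ∉ signs K) : UnitLinked pairing x y := by
  wlog hxy : x.2 + y.2 ≠ 0 generalizing y
  · rw [← unitLinked_apply_right_iff (pairing_involutive hF hK)]
    rw [pairing_of_snd_notMem hy1 hy2]
    refine this (swap_mem_signs hy1) (neg_mem_signs_iff.not.2 hy2) fun h => hx2 ?_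
    have hx0 : x.2 = 0 := (Ring.eq_self_iff_eq_zero_of_char_ne_two hK).1
      (by dsimp only at h; linear_combination -h - not_not.1 hxy)
    rw [hx0]
    simp [mem_signs]
  unfold UnitLinked
  rw [pairing_of_snd_notMem hx1 hx2, pairing_of_snd_notMem hy1 hy2]
  by_cases h1 : x.1 + y.1 = 0
  · refine Or.inr (Or.inr (Or.inr (isUnit_prod_iff_ne_zero.2 ⟨?_, fun h => hxy ?_⟩)))
    · rw [Prod.fst_add, eq_neg_of_add_eq_zero_right h1]
      exact swap_add_swap_neg_ne_zero hF hx1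
    · simp only [Prod.snd_add] at h
      linear_combination -h
  · exact Or.inl (isUnit_prod_iff_ne_zero.2 ⟨h1, hxy⟩)

lemma unitLinked_pairing_of_snd_notMem_signs_of_mem_signs (hF : ringChar F ≠ 2)
    (hK : ringChar K ≠ 2) {x y : F × K} (hx1 : x.1 ∈ signs F) (hx2 : x.2 ∉ signs K)
    (hy1 : y.1 ∈ signs F) (hy2 : y.2 ∈ signs K) : UnitLinked pairing x y := by
  have hx2' : -x.2 ∉ signs K := neg_mem_signs_iff.not.2 hx2
  by_contra h
  simp only [UnitLinked, not_or] at h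
  obtain ⟨h1, h2, h3, -⟩ := h
  rw [pairing_of_mem_signs hy1 hy2] at h2
  rw [pairing_of_snd_notMem hx1 hx2] at h3
  have e1 := add_fst_eq_zero_of_not_isUnit h1 (add_ne_zero_of_notMem_signs hx2 hy2)
  have e2 := add_fst_eq_zero_of_not_isUnit h2
    (add_ne_zero_of_notMem_signs hx2 (corePairing_mem_signs hF hK hy1 hy2).2)
  have e3 := add_fst_eq_zero_of_not_isUnit h3 (add_ne_zero_of_notMem_signs hx2' hy2)
  have hy0 := eq_zero_of_corePairing_fst_eq hF hK hy1 hy2 (by linear_combination e2 - e1)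
  have hx0 : x.1 = 0 := by simpa [hy0] using e1
  simp [hx0, hy0] at e3

lemma unitLinked_pairing_of_mem_signs (hF : ringChar F ≠ 2) (hK : ringChar K ≠ 2)
    {x y : F × K} (hx1 : x.1 ∈ signs F) (hx2 : x.2 ∈ signs K) (hy1 : y.1 ∈ signs F)
    (hy2 : y.2 ∈ signs K) (hyx : y ≠ x) (hyp : y ≠ pairing x) : UnitLinked pairing x y := by
  have hF' := Ring.neg_one_ne_one_of_char_ne_two hF
  have hK' := Ring.neg_one_ne_one_of_char_ne_two hK
  have hF2 := Ring.two_ne_zero hF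
  have hK2 := Ring.two_ne_zero hK
  rw [pairing_of_mem_signs hx1 hx2] at hyp
  unfold UnitLinked
  rw [pairing_of_mem_signs hx1 hx2, pairing_of_mem_signs hy1 hy2]
  obtain ⟨a, b⟩ := x
  obtain ⟨c, d⟩ := y
  rw [mem_signs] at hx1 hx2 hy1 hy2
  rcases hx1 with rfl | rfl | rfl <;> rcases hx2 with rfl | rfl | rfl <;>
  rcases hy1 with rfl | rfl | rfl <;> rcases hy2 with rfl | rfl | rfl <;>
  simp_all [corePairing, isUnit_prod_iff_ne_zero] <;> norm_num [hF2, hK2]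

lemma unitLinked_pairing (hF : ringChar F ≠ 2) (hK : ringChar K ≠ 2) {x y : F × K}
    (hyx : y ≠ x) (hyp : y ≠ pairing x) : UnitLinked pairing x y := by
  by_cases hx1 : x.1 ∈ signs F <;> by_cases hy1 : y.1 ∈ signs F
  · by_cases hx2 : x.2 ∈ signs K <;> by_cases hy2 : y.2 ∈ signs K
    · exact unitLinked_pairing_of_mem_signs hF hK hx1 hx2 hy1 hy2 hyx hyp
    · exact (unitLinked_pairing_of_snd_notMem_signs_of_mem_signs hF hK hy1 hy2 hx1 hx2).symm
    · exact unitLinked_pairing_of_snd_notMem_signs_of_mem_signs hF hK hx1 hx2 hy1 hy2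
    · exact unitLinked_pairing_of_snd_notMem_signs hF hK hx1 hx2 hy1 hy2
  · exact (unitLinked_pairing_of_fst_notMem_signs_of_fst_mem_signs hF hK hy1 hx1).symm
  · exact unitLinked_pairing_of_fst_notMem_signs_of_fst_mem_signs hF hK hx1 hy1
  · exact unitLinked_pairing_of_fst_notMem_signs hF hK hx1 hy1

end Pairing

theorem card_add_one_div_two_le_achromaticNumber_prod {F K : Type*} [Field F] [Field K]
    [Fintype F] [Fintype K] (hF : ringChar F ≠ 2) (hK : ringChar K ≠ 2) :
    (Fintype.card (F × K) + 1) / 2 ≤ achromaticNumber (unitaryCayley (F × K)) := by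
  classical
  exact le_achromaticNumber_unitaryCayley (pairing_involutive hF hK) pairing_zero
    (not_isUnit_add_pairing hF hK) fun _ _ => unitLinked_pairing hF hK

end UnitaryCayley

theorem stmt_2 (p q : ℕ) (hp : p.Prime) (hq : q.Prime) (h3 : 3 ≤ p) (hpq : p < q) :
    (p * q + 1) / 2 ≤ achromaticNumber (unitaryCayley (ZMod (p * q))) := by
  have hchar : ∀ n, 2 < n → ringChar (ZMod n) ≠ 2 := fun n hn => by
    rw [ZMod.ringChar_zmod_n]
    omega
  have := Fact.mk hp
  have := Fact.mk hq
  have hco : p.Coprime q := (Nat.coprime_primes hp hq).2 hpq.ne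
  rw [(ZMod.chineseRemainder hco).unitaryCayleyIso.achromaticNumber_eq]
  simpa using UnitaryCayley.card_add_one_div_two_le_achromaticNumber_prod
    (hchar p (by omega)) (hchar q (by omega))
end

section
/- Let R = R₁ × R₂ × ⋯ × Rₘ be a finite commutative ring with unity having an odd number of elements, where each Rᵢ is a finite commutative local ring with unique maximal ideal Mᵢ. Then the chromatic number of the unitary addition Cayley graph U(R) is at most m + ∏_{i=1}^{m} (|Rᵢ| − |Mᵢ|)/2. -/
/-! Colour a non-unit `x` of `∏ i, R i` by an index `i` with `x i` in the maximal ideal, and a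
unit by the tuple of the classes of its coordinates modulo sign. Two non-units with the same
colour `i` have `x i + y i` in the maximal ideal of the local ring `R i`, so they are not adjacent;
two distinct units with the same colour satisfy `x i = -y i` in some coordinate, where their sum
vanishes. As `|R i|` is odd, `u ≠ -u` for every unit `u`, so each coordinate contributes at most
`(|R i| - |maximalIdeal (R i)|) / 2` classes. -/

def negSetoid (α : Type*) [InvolutiveNeg α] : Setoid α where
  r a b := a = b ∨ a = -b
  iseqv := by
    refine ⟨fun a => .inl rfl, ?_, ?_⟩
    · rintro a b (rfl | rfl) <;> simp
    · rintro a b c (rfl | rfl) (rfl | rfl) <;> simp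

namespace negSetoid

open Finset

variable {α : Type*} [InvolutiveNeg α]

theorem mk_eq_mk_iff {a b : α} :
    (⟦a⟧ : Quotient (negSetoid α)) = ⟦b⟧ ↔ a = b ∨ a = -b :=
  Quotient.eq

@[simp]
theorem mk_neg (a : α) : (⟦-a⟧ : Quotient (negSetoid α)) = ⟦a⟧ :=
  mk_eq_mk_iff.mpr (.inr rfl)

theorem two_mul_card_quotient_le [Finite α] (h : ∀ a : α, -a ≠ a) :
    2 * Nat.card (Quotient (negSetoid α)) ≤ Nat.card α := by
  classical
  have := Fintype.ofFinite α
  have hfiber (q : Quotient (negSetoid α)) :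
      2 ≤ #{a | (⟦a⟧ : Quotient (negSetoid α)) = q} := by
    rw [← card_pair (h q.out).symm]
    refine card_le_card fun a ha => ?_
    rcases mem_insert.mp ha with rfl | ha <;> simp_all
  have himage : univ.image (Quotient.mk (negSetoid α)) = univ :=
    image_univ_of_surjective Quotient.mk_surjective
  simpa [himage, Nat.card_eq_fintype_card] using
    mul_card_image_le_card (univ : Finset α) 2 fun q _ => hfiber q

end negSetoid

theorem neg_ne_self_of_odd_card {G : Type*} [AddGroup G] (hG : Odd (Nat.card G)) {a : G}
    (ha : a ≠ 0) : -a ≠ a := by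
  intro h
  have h2 : (2 : ℕ) • a = (2 : ℕ) • (0 : G) := by
    rw [smul_zero, two_nsmul]
    nth_rw 1 [← h]
    exact neg_add_cancel a
  exact ha ((Nat.coprime_two_right.mpr hG).nsmul_right_bijective.injective h2)

theorem Units.neg_ne_self_of_odd_card {S : Type*} [Ring S] [Nontrivial S]
    (hS : Odd (Nat.card S)) (u : Sˣ) : -u ≠ u :=
  fun h => _root_.neg_ne_self_of_odd_card hS u.ne_zero (congrArg Units.val h)

theorem IsLocalRing.card_units_add_card_maximalIdeal (S : Type*) [CommRing S] [IsLocalRing S]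
    [Finite S] : Nat.card Sˣ + Nat.card (IsLocalRing.maximalIdeal S) = Nat.card S := by
  rw [← Nat.card_sum]
  refine Nat.card_eq_of_bijective (Sum.elim Units.val Subtype.val) ⟨?_, fun x => ?_⟩
  · refine Units.val_injective.sumElim Subtype.val_injective fun u x h => ?_
    exact x.2 (h ▸ u.isUnit)
  · by_cases hx : IsUnit x
    · exact ⟨.inl hx.unit, hx.unit_spec⟩
    · exact ⟨.inr ⟨x, hx⟩, rfl⟩

theorem IsLocalRing.card_quotient_negSetoid_units_le (S : Type*) [CommRing S] [IsLocalRing S]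
    [Finite S] (hS : Odd (Nat.card S)) :
    Nat.card (Quotient (negSetoid Sˣ)) ≤ (Nat.card S - Nat.card (maximalIdeal S)) / 2 := by
  rw [Nat.le_div_iff_mul_le two_pos, mul_comm, ← card_units_add_card_maximalIdeal S,
    Nat.add_sub_cancel]
  exact negSetoid.two_mul_card_quotient_le (Units.neg_ne_self_of_odd_card hS)

section Coloring

variable {ι : Type*} (R : ι → Type*) [∀ i, CommRing (R i)]

open Classical in
noncomputable def unitaryCayleyColor (x : ∀ i, R i) :
    ι ⊕ ∀ i, Quotient (negSetoid (R i)ˣ) :=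
  if h : ∀ i, IsUnit (x i) then .inr fun i => ⟦(h i).unit⟧
  else .inl (Classical.not_forall.mp h).choose

variable [∀ i, IsLocalRing (R i)]

noncomputable def unitaryCayleyColoring :
    (unitaryCayley (∀ i, R i)).Coloring (ι ⊕ ∀ i, Quotient (negSetoid (R i)ˣ)) :=
  .mk (unitaryCayleyColor R) fun {x y} ⟨hne, hxy⟩ heq => by
    have hxy (i : ι) : IsUnit (x i + y i) := Pi.isUnit_iff.mp hxy i
    unfold unitaryCayleyColor at heq
    split_ifs at heq with hx hy hy
    · refine hne (funext fun i => ?_)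
      have hi := negSetoid.mk_eq_mk_iff.mp (congrFun (Sum.inr_injective heq) i)
      rcases hi with hi | hi
      · simpa using congrArg Units.val hi
      · have h0 : x i + y i = 0 := by simpa using congrArg (Units.val · + y i) hi
        exact (not_isUnit_zero (h0 ▸ hxy i)).elim
    · set i := (Classical.not_forall.mp hx).choose
      have hxi : x i ∈ nonunits _ := (Classical.not_forall.mp hx).choose_spec
      have hyi : y i ∈ nonunits _ :=
        Sum.inl_injective heq ▸ (Classical.not_forall.mp hy).choose_spec
      exact IsLocalRing.nonunits_add hxi hyi (hxy i)

theorem unitaryCayley_colorable [Fintype ι] [∀ i, Finite (R i)] :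
    (unitaryCayley (∀ i, R i)).Colorable
      (Fintype.card ι + ∏ i, Nat.card (Quotient (negSetoid (R i)ˣ))) := by
  classical
  have (i : ι) : Fintype (Quotient (negSetoid (R i)ˣ)) := Fintype.ofFinite _
  simpa [Nat.card_eq_fintype_card] using (unitaryCayleyColoring R).colorable

end Coloring

theorem stmt_6 (m : ℕ) (R : Fin m → Type*) [∀ i, CommRing (R i)]
    [∀ i, IsLocalRing (R i)] [∀ i, Fintype (R i)]
    (hodd : Odd (Fintype.card (∀ i, R i))) :
    (unitaryCayley (∀ i, R i)).chromaticNumber ≤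
        ((m + ∏ i, (Fintype.card (R i) - Nat.card (IsLocalRing.maximalIdeal (R i))) / 2 : ℕ) : ℕ∞) := by
  have hodd_factor (i : Fin m) : Odd (Nat.card (R i)) := by
    rw [← Nat.card_eq_fintype_card, Nat.card_pi] at hodd
    exact hodd.of_dvd_nat (Finset.dvd_prod_of_mem _ (Finset.mem_univ i))
  refine (unitaryCayley_colorable R).chromaticNumber_le.trans ?_
  rw [Fintype.card_fin, Nat.cast_le]
  gcongr with i
  simpa only [Nat.card_eq_fintype_card] using
    IsLocalRing.card_quotient_negSetoid_units_le (R i) (hodd_factor i)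
end

section
/- For every odd integer n > 1, the number of edges of the unitary addition Cayley graph U(ℤₙ) equals (n − 1)·φ(n)/2, where φ is Euler's totient function. In particular, for a prime q > 3, the number of edges of U(ℤ_{3q}) equals (3q − 1)(q − 1). -/
/-!
Translating by `x` maps the neighbourhood of `x` in `U(R)` onto the units other than `x + x`.
When `2` is a unit, `x + x = 2x` is a unit exactly when `x` is, so every vertex has degree
`|Rˣ|`, minus one if it is itself a unit. Summing over the vertices gives
`2 |E| = |R| |Rˣ| - |Rˣ|`, and `|(ℤ/n)ˣ| = φ(n)`.
-/

open Finset

lemma isUnit_add_self_iff {R : Type*} [CommSemiring R] (h2 : IsUnit (2 : R)) (x : R) :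
    IsUnit (x + x) ↔ IsUnit x := by
  rw [← two_mul, IsUnit.mul_iff, and_iff_right h2]

lemma card_filter_isUnit {M : Type*} [Monoid M] [Fintype M] [DecidableEq M] :
    #(univ.filter (IsUnit : M → Prop)) = Fintype.card Mˣ := by
  rw [← card_univ, ← card_map ⟨Units.val, Units.val_injective⟩]
  congr 1
  ext z
  simp [IsUnit, eq_comm]

section FiniteRing

variable {R : Type*} [CommRing R] [Fintype R] [DecidableEq R] [DecidableRel (unitaryCayley R).Adj]

lemma unitaryCayley_neighborFinset_map_addLeft (x : R) :
    ((unitaryCayley R).neighborFinset x).map (Equiv.addLeft x).toEmbedding =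
      (univ.filter IsUnit).erase (x + x) := by
  ext z
  rw [mem_map_equiv, SimpleGraph.mem_neighborFinset, mem_erase, mem_filter]
  change x ≠ -x + z ∧ IsUnit (x + (-x + z)) ↔ _
  rw [add_neg_cancel_left, ne_comm, Ne, neg_add_eq_iff_eq_add]
  simp [and_comm]

lemma unitaryCayley_degree_add_ite (h2 : IsUnit (2 : R)) (x : R) :
    (unitaryCayley R).degree x + (if IsUnit x then 1 else 0) = Fintype.card Rˣ := by
  rw [SimpleGraph.degree, ← card_map (Equiv.addLeft x).toEmbedding,
    unitaryCayley_neighborFinset_map_addLeft, ← card_filter_isUnit]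
  split_ifs with hx
  · exact card_erase_add_one (by simpa [isUnit_add_self_iff h2])
  · rw [erase_eq_of_notMem (by simpa [isUnit_add_self_iff h2]), add_zero]

lemma two_mul_card_edgeFinset_unitaryCayley (h2 : IsUnit (2 : R)) :
    2 * #(unitaryCayley R).edgeFinset = (Fintype.card R - 1) * Fintype.card Rˣ := by
  have hsum := Finset.sum_congr rfl fun x (_ : x ∈ univ) => unitaryCayley_degree_add_ite h2 x
  rw [sum_add_distrib, SimpleGraph.sum_degrees_eq_twice_card_edges, sum_boole,
    Nat.cast_id, card_filter_isUnit, sum_const, card_univ, smul_eq_mul] at hsum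
  rw [Nat.sub_one_mul]
  omega

end FiniteRing

lemma isUnit_two_zmod_of_odd {n : ℕ} (hn : Odd n) : IsUnit (2 : ZMod n) := by
  exact_mod_cast (ZMod.isUnit_iff_coprime 2 n).mpr (Nat.coprime_two_left.mpr hn)

lemma card_edgeSet_unitaryCayley_zmod {n : ℕ} (hn : Odd n) :
    Nat.card (unitaryCayley (ZMod n)).edgeSet = (n - 1) * n.totient / 2 := by
  classical
  have : NeZero n := ⟨hn.pos.ne'⟩
  have h := two_mul_card_edgeFinset_unitaryCayley (isUnit_two_zmod_of_odd hn)
  rw [ZMod.card, ZMod.card_units_eq_totient] at h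
  rw [Nat.card_eq_fintype_card, ← SimpleGraph.edgeFinset_card]
  omega

theorem stmt_14 :
    (∀ n : ℕ, Odd n → 1 < n →
      Nat.card (unitaryCayley (ZMod n)).edgeSet = (n - 1) * n.totient / 2) ∧
    (∀ q : ℕ, q.Prime → 3 < q →
      Nat.card (unitaryCayley (ZMod (3 * q))).edgeSet = (3 * q - 1) * (q - 1)) := by
  refine ⟨fun n hn _ => card_edgeSet_unitaryCayley_zmod hn, fun q hq hq3 => ?_⟩
  have hcop : Nat.Coprime 3 q := (Nat.coprime_primes Nat.prime_three hq).mpr (by omega)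
  have hodd : Odd (3 * q) := Nat.odd_mul.mpr ⟨by decide, hq.odd_of_ne_two (by omega)⟩
  rw [card_edgeSet_unitaryCayley_zmod hodd, Nat.totient_mul hcop, Nat.totient_prime hq,
    Nat.totient_prime Nat.prime_three, mul_left_comm]
  exact Nat.mul_div_cancel_left _ two_pos
end
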